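/- Let A and B be finite prime non-unital, non-associative k-algebras over the same unital commutative ring k. If Id(A) = Id(B), then A and B are isomorphic as k-algebras. -/

import Mathlib

universe u v w x
open Function
noncomputable section

/-- The free non-unital, non-associative `k`-algebra on the countably many
generators `x₁, x₂, …` (indexed by `ℕ`): the magma algebra over `k` of the free
magma on `ℕ`. -/
abbrev FreeAlg (k : Type u) [CommRing k] : Type u := FreeNonUnitalNonAssocAlgebra k ℕ

/-- `f` is a polynomial identity of the algebra `A`: every `k`-algebra
homomorphism from the free algebra to `A` sends `f` to `0`. -/
def IsPI (k : Type u) [CommRing k] (A : Type v) [NonUnitalNonAssocRing A] [Module k A]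
    [SMulCommClass k A A] [IsScalarTower k A A] (f : FreeAlg k) : Prop :=
  ∀ φ : FreeAlg k →ₙₐ[k] A, φ f = 0

/-- `Id(A)`: the set of all polynomial identities of `A`. -/
def Ids (k : Type u) [CommRing k] (A : Type v) [NonUnitalNonAssocRing A] [Module k A]
    [SMulCommClass k A A] [IsScalarTower k A A] : Set (FreeAlg k) :=
  {f | IsPI k A f}
/-- Number of occurrences of the variable `i` in a free-magma word. -/
def varCount : FreeMagma ℕ → ℕ → ℕ
  | FreeMagma.of x, i => if x = i then 1 else 0
  | FreeMagma.mul a b, i => varCount a i + varCount b i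

/-- `f` is multilinear in the first `m` variables `x₁, …, x_m`: it is a `k`-linear
combination of monomials in each of which every one of the first `m` variables occurs
exactly once and no other variable occurs. -/
def IsMultilinear (k : Type u) [CommRing k] (m : ℕ) (f : FreeAlg k) : Prop :=
  f ∈ Submodule.span k {w : FreeAlg k |
    ∃ u : FreeMagma ℕ, (∀ i, varCount u i = if i < m then 1 else 0) ∧
      w = FreeMagma.lift (FreeNonUnitalNonAssocAlgebra.of k) u}
/-- An ideal of the algebra `A`: a `k`-submodule `I` with `AI ⊆ I` and `IA ⊆ I`. -/
def IsIdeal (k : Type u) [CommRing k] (A : Type v) [NonUnitalNonAssocRing A] [Module k A]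
    (I : Submodule k A) : Prop :=
  ∀ a : A, ∀ x ∈ I, a * x ∈ I ∧ x * a ∈ I
/-- The product `S·T` of two subsets of `A`: the `k`-span of all values
`f(s, t, a₁, …, a_t)` of polynomials `f` multilinear in `x₁, …, x_{2+t}`,
where `s ∈ S`, `t ∈ T` and the remaining arguments run over `A`. -/
def mulSet (k : Type u) [CommRing k] (A : Type v) [NonUnitalNonAssocRing A] [Module k A]
    [SMulCommClass k A A] [IsScalarTower k A A] (S T : Set A) : Submodule k A :=
  Submodule.span k {y : A | ∃ (t : ℕ) (f : FreeAlg k), IsMultilinear k (2 + t) f ∧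
    ∃ v : ℕ → A, v 0 ∈ S ∧ v 1 ∈ T ∧ FreeNonUnitalNonAssocAlgebra.lift k v f = y}
/-- `A` is a prime algebra: `I·J ≠ 0` for all nonzero ideals `I, J` of `A`. -/
def IsPrimeAlg (k : Type u) [CommRing k] (A : Type v) [NonUnitalNonAssocRing A] [Module k A]
    [SMulCommClass k A A] [IsScalarTower k A A] : Prop :=
  ∀ I J : Submodule k A, IsIdeal k A I → IsIdeal k A J → I ≠ ⊥ → J ≠ ⊥ →
    mulSet k A (I : Set A) (J : Set A) ≠ ⊥

/-!
Let `Ψ : F → B` send `x₁, …, x_n` onto `B` and all other variables to `0`. Since `Id(A) ⊆ Id(B)`,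
the joint kernel of the finitely many evaluations `θ_v` of `F` at `n`-tuples `v` of elements of `A`
lies in `ker Ψ`. The kernel of a surjection onto a prime algebra is a prime ideal: the product of
the images of two ideals lies in the image of their intersection, because a multilinear polynomial
with one argument in each ideal takes values in both. Hence `ker θ_v ⊆ ker Ψ` for a single `v`,
so `B` is a quotient of a subalgebra of `A` and `|B| ≤ |A|`. By symmetry `|A| = |B|`, which forces
`θ_v` to be onto and the induced map `A → B` to be a bijective homomorphism.
-/

open FreeNonUnitalNonAssocAlgebra Function

section
variable {k : Type u} [CommRing k] {A : Type*} [NonUnitalNonAssocRing A] [Module k A]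
  {B : Type*} [NonUnitalNonAssocRing B] [Module k B]
  {C : Type*} [NonUnitalNonAssocRing C] [Module k C]

theorem isIdeal_ker (φ : C →ₙₐ[k] A) : IsIdeal k C (LinearMap.ker (φ : C →ₗ[k] A)) := by
  intro c x hx
  change φ x = 0 at hx
  simp [hx]

theorem IsIdeal.biInf {ι : Type*} {P : ι → Submodule k C} (hP : ∀ i, IsIdeal k C (P i))
    (S : Finset ι) : IsIdeal k C (⨅ i ∈ S, P i) := by
  intro c x hx
  simp only [Submodule.mem_iInf] at hx ⊢
  exact ⟨fun i hi => (hP i c x (hx i hi)).1, fun i hi => (hP i c x (hx i hi)).2⟩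

theorem IsIdeal.map {P : Submodule k C} (hP : IsIdeal k C P) {φ : C →ₙₐ[k] B}
    (hφ : Surjective φ) : IsIdeal k B (P.map (φ : C →ₗ[k] B)) := by
  rintro b _ ⟨x, hx, rfl⟩
  obtain ⟨c, rfl⟩ := hφ b
  exact ⟨⟨c * x, (hP c x hx).1, map_mul φ c x⟩, ⟨x * c, (hP c x hx).2, map_mul φ x c⟩⟩

theorem IsIdeal.freeMagmaLift_mem {P : Submodule k C} (hP : IsIdeal k C P) {w : ℕ → C} {j : ℕ}
    (hw : w j ∈ P) {u : FreeMagma ℕ} (hu : 0 < varCount u j) : FreeMagma.lift w u ∈ P := by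
  induction u with
  | ih1 x =>
    obtain rfl : x = j := by by_contra h; simp [varCount, h] at hu
    simpa using hw
  | ih2 u₁ u₂ h₁ h₂ =>
    simp only [varCount] at hu
    rw [map_mul]
    rcases Nat.eq_zero_or_pos (varCount u₁ j) with h | h
    · exact (hP _ _ (h₂ (by omega))).1
    · exact (hP _ _ (h₁ h)).2

theorem factorsThrough_of_ker_le {θ : C →ₙₐ[k] A} {Ψ : C →ₙₐ[k] B}
    (h : LinearMap.ker (θ : C →ₗ[k] A) ≤ LinearMap.ker (Ψ : C →ₗ[k] B)) :
    FactorsThrough Ψ θ := fun c d hcd => by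
  have : c - d ∈ LinearMap.ker (Ψ : C →ₗ[k] B) := h (by simp [hcd])
  simpa [sub_eq_zero] using this

theorem card_le_of_ker_le [Finite A] {θ : C →ₙₐ[k] A} {Ψ : C →ₙₐ[k] B} (hΨ : Surjective Ψ)
    (h : LinearMap.ker (θ : C →ₗ[k] A) ≤ LinearMap.ker (Ψ : C →ₗ[k] B)) :
    Nat.card B ≤ Nat.card A := by
  refine Nat.card_le_card_of_surjective (extend θ Ψ 0) fun b => ?_
  obtain ⟨c, rfl⟩ := hΨ b
  exact ⟨θ c, (factorsThrough_of_ker_le h).extend_apply 0 c⟩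

theorem exists_mulEquiv_of_ker_le [Finite A] {θ : C →ₙₐ[k] A} {Ψ : C →ₙₐ[k] B}
    (hΨ : Surjective Ψ) (h : LinearMap.ker (θ : C →ₗ[k] A) ≤ LinearMap.ker (Ψ : C →ₗ[k] B))
    (hcard : Nat.card A = Nat.card B) :
    ∃ e : A ≃ₗ[k] B, ∀ x y : A, e (x * y) = e x * e y := by
  set g := extend θ Ψ 0
  have hg : ∀ c, g (θ c) = Ψ c := (factorsThrough_of_ker_le h).extend_apply 0
  have hgs : Surjective g := fun b => by
    obtain ⟨c, rfl⟩ := hΨ b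
    exact ⟨θ c, hg c⟩
  have hgb : Bijective g := (Nat.bijective_iff_surjective_and_card g).2 ⟨hgs, hcard⟩
  have hθ : Surjective θ := fun a => by
    obtain ⟨c, hc⟩ := hΨ (g a)
    exact ⟨c, hgb.1 (by rw [hg, hc])⟩
  let L : A →ₗ[k] B :=
    { toFun := g
      map_add' := by
        intro x y
        obtain ⟨c, rfl⟩ := hθ x
        obtain ⟨d, rfl⟩ := hθ y
        simp only [← map_add, hg]
      map_smul' := by
        intro r x
        obtain ⟨c, rfl⟩ := hθ x
        simp only [← map_smul, hg, RingHom.id_apply] }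
  refine ⟨LinearEquiv.ofBijective L hgb, fun x y => ?_⟩
  obtain ⟨c, rfl⟩ := hθ x
  obtain ⟨d, rfl⟩ := hθ y
  show g _ = g _ * g _
  simp only [← map_mul, hg]

end

section
variable {k : Type u} [CommRing k]
  {A : Type*} [NonUnitalNonAssocRing A] [Module k A] [SMulCommClass k A A] [IsScalarTower k A A]
  {B : Type*} [NonUnitalNonAssocRing B] [Module k B] [SMulCommClass k B B] [IsScalarTower k B B]
  {C : Type*} [NonUnitalNonAssocRing C] [Module k C] [SMulCommClass k C C] [IsScalarTower k C C]

theorem FreeNonUnitalNonAssocAlgebra.map_lift_apply {X : Type*} (φ : C →ₙₐ[k] A) (w : X → C)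
    (f : FreeNonUnitalNonAssocAlgebra k X) : φ (lift k w f) = lift k (φ ∘ w) f := by
  rw [← NonUnitalAlgHom.comp_apply]
  congr 1
  exact hom_ext k fun x => by simp

theorem FreeNonUnitalNonAssocAlgebra.lift_freeMagmaLift_of {X : Type*} (w : X → C)
    (u : FreeMagma X) : lift k w (FreeMagma.lift (of k) u) = FreeMagma.lift w u := by
  induction u with
  | ih1 x => simp
  | ih2 u₁ u₂ h₁ h₂ => simp [h₁, h₂]

theorem IsMultilinear.lift_mem {m : ℕ} {f : FreeAlg k} (hf : IsMultilinear k m f)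
    {P : Submodule k C} (hP : IsIdeal k C P) {w : ℕ → C} {j : ℕ} (hj : j < m) (hw : w j ∈ P) :
    lift k w f ∈ P := by
  refine (Submodule.span_le (p := P.comap (lift k w : FreeAlg k →ₗ[k] C)) |>.mpr ?_) hf
  rintro _ ⟨u, hu, rfl⟩
  change lift k w _ ∈ P
  rw [lift_freeMagmaLift_of]
  exact hP.freeMagmaLift_mem hw (by simp [hu, hj])

theorem IsPrimeAlg.le_ker_or_le_ker (hB : IsPrimeAlg k B) {Ψ : C →ₙₐ[k] B} (hΨ : Surjective Ψ)
    {P Q : Submodule k C} (hP : IsIdeal k C P) (hQ : IsIdeal k C Q)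
    (h : P ⊓ Q ≤ LinearMap.ker (Ψ : C →ₗ[k] B)) :
    P ≤ LinearMap.ker (Ψ : C →ₗ[k] B) ∨ Q ≤ LinearMap.ker (Ψ : C →ₗ[k] B) := by
  rw [LinearMap.le_ker_iff_map, LinearMap.le_ker_iff_map]
  by_contra! hne
  refine hB _ _ (hP.map hΨ) (hQ.map hΨ) hne.1 hne.2 ?_
  rw [mulSet, Submodule.span_eq_bot]
  rintro _ ⟨t, f, hf, w, ⟨p, hp, hp0⟩, ⟨q, hq, hq1⟩, rfl⟩
  let w' : ℕ → C := fun j => if j = 0 then p else if j = 1 then q else surjInv hΨ (w j)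
  have hw' : Ψ ∘ w' = w := by
    funext j
    rcases j with _ | _ | j
    · exact hp0
    · exact hq1
    · exact surjInv_eq hΨ (w _)
  rw [← hw', ← map_lift_apply]
  exact h ⟨hf.lift_mem hP (j := 0) (by omega) hp, hf.lift_mem hQ (j := 1) (by omega) hq⟩

theorem IsPrimeAlg.exists_le_ker_of_biInf_le (hB : IsPrimeAlg k B) {Ψ : C →ₙₐ[k] B}
    (hΨ : Surjective Ψ) {ι : Type*} {P : ι → Submodule k C} (hP : ∀ i, IsIdeal k C (P i))
    {S : Finset ι} (hS : S.Nonempty) (h : ⨅ i ∈ S, P i ≤ LinearMap.ker (Ψ : C →ₗ[k] B)) :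
    ∃ i ∈ S, P i ≤ LinearMap.ker (Ψ : C →ₗ[k] B) := by
  classical
  induction hS using Finset.Nonempty.cons_induction with
  | singleton a => exact ⟨a, Finset.mem_singleton_self a, by simpa using h⟩
  | cons a s ha hs ih =>
    rw [Finset.cons_eq_insert, Finset.iInf_insert] at h
    rcases hB.le_ker_or_le_ker hΨ (hP a) (IsIdeal.biInf hP s) h with ha | hs
    · exact ⟨a, Finset.mem_cons_self a s, ha⟩
    · obtain ⟨i, hi, hiP⟩ := ih hs
      exact ⟨i, Finset.mem_cons_of_mem hi, hiP⟩

variable (k) in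
def truncateVars (n : ℕ) : FreeAlg k →ₙₐ[k] FreeAlg k :=
  lift k fun i => if i < n then of k i else 0

theorem lift_truncateVars (a : ℕ → A) (n : ℕ) (f : FreeAlg k) :
    lift k a (truncateVars k n f) = lift k (fun i => if i < n then a i else 0) f := by
  rw [truncateVars, map_lift_apply]
  congr
  funext i
  split_ifs with h <;> simp [h]

variable (k) in
def evalTuple {n : ℕ} (v : Fin n → A) : FreeAlg k →ₙₐ[k] A :=
  lift k fun i => if h : i < n then v ⟨i, h⟩ else 0

theorem truncateVars_mem_ids {n : ℕ} {f : FreeAlg k}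
    (hf : ∀ v : Fin n → A, evalTuple k v f = 0) :
    truncateVars k n f ∈ Ids k A := by
  intro φ
  rw [← lift_comp_of k φ, lift_truncateVars]
  simpa [evalTuple] using hf fun i => φ (of k i)

theorem iInf_ker_evalTuple_le (hPI : Ids k A ⊆ Ids k B) {n : ℕ} {g : ℕ → B}
    (hg : ∀ i, n ≤ i → g i = 0) :
    ⨅ v : Fin n → A, LinearMap.ker (evalTuple k v : FreeAlg k →ₗ[k] A) ≤
      LinearMap.ker (lift k g : FreeAlg k →ₗ[k] B) := by
  intro f hf
  simp only [Submodule.mem_iInf, LinearMap.mem_ker] at hf ⊢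
  have h := hPI (truncateVars_mem_ids hf) (lift k g)
  rwa [lift_truncateVars, show (fun i => if i < n then g i else 0) = g from
    funext fun i => by split_ifs with hi; exacts [rfl, (hg i (not_lt.1 hi)).symm]] at h

theorem exists_ker_le_of_ids_subset [Finite A] [Finite B] (hB : IsPrimeAlg k B)
    (hPI : Ids k A ⊆ Ids k B) :
    ∃ (θ : FreeAlg k →ₙₐ[k] A) (Ψ : FreeAlg k →ₙₐ[k] B), Surjective Ψ ∧
      LinearMap.ker (θ : FreeAlg k →ₗ[k] A) ≤ LinearMap.ker (Ψ : FreeAlg k →ₗ[k] B) := by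
  obtain ⟨n, ⟨e⟩⟩ := Finite.exists_equiv_fin B
  let g : ℕ → B := fun i => if h : i < n then e.symm ⟨i, h⟩ else 0
  have hΨ : Surjective (lift k g) := fun b => ⟨of k (e b), by simp [g]⟩
  have hg : ∀ i, n ≤ i → g i = 0 := fun i hi => dif_neg (not_lt.2 hi)
  have : Fintype (Fin n → A) := Fintype.ofFinite _
  obtain ⟨v, -, hv⟩ := hB.exists_le_ker_of_biInf_le hΨ (fun v => isIdeal_ker (evalTuple k v))
    Finset.univ_nonempty (by simpa using iInf_ker_evalTuple_le hPI hg)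
  exact ⟨evalTuple k v, lift k g, hΨ, hv⟩

end

/-- Two finite prime algebras over the same unital commutative
ring `k` with the same polynomial identities are isomorphic as `k`-algebras. -/
theorem prime_iso_of_same_ids (k : Type u) [CommRing k]
    (A : Type v) [NonUnitalNonAssocRing A] [Module k A] [SMulCommClass k A A]
    [IsScalarTower k A A] [Finite A]
    (B : Type w) [NonUnitalNonAssocRing B] [Module k B] [SMulCommClass k B B]
    [IsScalarTower k B B] [Finite B]
    (hA : IsPrimeAlg k A) (hB : IsPrimeAlg k B)
    (hPI : Ids k A = Ids k B) :
    ∃ e : A ≃ₗ[k] B, ∀ x y : A, e (x * y) = e x * e y := by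
  obtain ⟨θ, Ψ, hΨ, hker⟩ := exists_ker_le_of_ids_subset hB hPI.le
  obtain ⟨θ', Ψ', hΨ', hker'⟩ := exists_ker_le_of_ids_subset hA hPI.ge
  exact exists_mulEquiv_of_ker_le hΨ hker
    (le_antisymm (card_le_of_ker_le hΨ' hker') (card_le_of_ker_le hΨ hker))
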